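/- arXiv:2103.02289 — 6 statements merged into one kernel-verified Lean document; each statement's English description precedes it below -/
import Mathlib

section
/- Let ε > 0 and let A ⊆ [0,1] ⊂ ℝ be a measurable set with λ(A) ≥ ε. Then there exists a positive integer k = O(1/ε²) and b ∈ ℝ such that the k-fold sumset kA translated by b contains [0,1], i.e. [0,1] ⊆ kA + b. -/
open Pointwise MeasureTheory

/-- The `k`-fold sumset `kA`: `0A = {0}` and `(k+1)A = A + kA`. -/
def foldSum {α : Type*} [AddMonoid α] : ℕ → Set α → Set α
  | 0, _ => {0}
  | (k + 1), A => A + foldSum k A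

open Set Filter Metric

lemma foldSum_succ {α : Type*} [AddMonoid α] (k : ℕ) (A : Set α) :
    foldSum (k+1) A = A + foldSum k A := rfl

lemma foldSum_zero {α : Type*} [AddMonoid α] (A : Set α) : foldSum 0 A = {0} := rfl

lemma foldSum_add {α : Type*} [AddMonoid α] (a b : ℕ) (A : Set α) :
    foldSum (a + b) A = foldSum a A + foldSum b A := by
  induction a with
  | zero => simp [foldSum_zero, Set.singleton_add, Set.image_add_left]
  | succ n ih =>
      have : n + 1 + b = (n + b) + 1 := by ring
      rw [this, foldSum_succ, ih, foldSum_succ, add_assoc]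

lemma mem_foldSum_add {α : Type*} [AddMonoid α] {a b : ℕ} {A : Set α} {x y : α}
    (hx : x ∈ foldSum a A) (hy : y ∈ foldSum b A) : x + y ∈ foldSum (a+b) A := by
  rw [foldSum_add]; exact Set.add_mem_add hx hy

lemma nsmul_mem_foldSum {A : Set ℝ} {d : ℝ} (hd : d ∈ A) (j : ℕ) :
    (j : ℝ) * d ∈ foldSum j A := by
  induction j with
  | zero => simp [foldSum_zero]
  | succ n ih =>
      have : ((n+1 : ℕ) : ℝ) * d = d + (n:ℝ) * d := by push_cast; ring
      rw [this, foldSum_succ]; exact Set.add_mem_add hd ih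

lemma foldSum_mono_index {A : Set ℝ} (h0 : (0:ℝ) ∈ A) {a : ℕ} (m : ℕ) {y : ℝ}
    (hy : y ∈ foldSum a A) : y ∈ foldSum (a + m) A := by
  induction m with
  | zero => simpa using hy
  | succ n ih =>
      have : a + (n+1) = (a + n) + 1 := by ring
      rw [this, foldSum_succ]
      have := Set.add_mem_add h0 ih
      simpa using this

lemma mem_foldSum_translate {A : Set ℝ} {u : ℝ} {n : ℕ} {y : ℝ}
    (hy : y ∈ foldSum n ((· + u) ⁻¹' A)) : y + n * u ∈ foldSum n A := by
  induction n generalizing y with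
  | zero => simpa [foldSum_zero] using hy
  | succ n ih =>
      rw [foldSum_succ] at hy
      obtain ⟨x, hx, z, hz, rfl⟩ := hy
      have h1 : x + u ∈ A := hx
      have := Set.add_mem_add h1 (ih hz)
      rw [← foldSum_succ] at this
      convert this using 1
      push_cast; ring

lemma mem_foldSum_one {B : Set ℝ} {a : ℝ} (h : a ∈ B) : a ∈ foldSum 1 B := by
  rw [foldSum_succ]
  have h0 : (0:ℝ) ∈ foldSum 0 B := rfl
  have := Set.add_mem_add h h0
  simpa using this

lemma foldSum_subset_Icc {B : Set ℝ} (hB : B ⊆ Icc (-1) 1) (n : ℕ) :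
    foldSum n B ⊆ Icc (-(n:ℝ)) n := by
  induction n with
  | zero => intro x hx; rw [show x = 0 from hx]; simp
  | succ n ih =>
      intro x hx
      rw [foldSum_succ] at hx
      obtain ⟨a, ha, y, hy, rfl⟩ := hx
      obtain ⟨h1, h2⟩ := hB ha
      obtain ⟨h3, h4⟩ := ih hy
      constructor
      · push_cast; nlinarith
      · push_cast; nlinarith

lemma neg_translate_volume (t : ℝ) (W : Set ℝ) : volume ((fun x => t - x) ⁻¹' W) = volume W := by
  have h : (fun x : ℝ => t - x) ⁻¹' W = (fun x : ℝ => -x) ⁻¹' ((fun x : ℝ => x + t) ⁻¹' W) := by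
    ext x; simp only [Set.mem_preimage]; ring_nf
  rw [h, Measure.measure_preimage_neg, measure_preimage_add_right]


lemma hull_inter_nonempty {P Q : Set ℝ} {a b : ℝ}
    (hP : MeasurableSet P) (hPab : P ⊆ Icc a b) (hQab : Q ⊆ Icc a b)
    (h : ENNReal.ofReal (b - a) < volume P + volume Q) : (P ∩ Q).Nonempty := by
  by_contra hc
  rw [Set.not_nonempty_iff_eq_empty] at hc
  have hdisj : Disjoint P Q := Set.disjoint_iff_inter_eq_empty.mpr hc
  have heq : volume (P ∪ Q) = volume P + volume Q := measure_union' hdisj hP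
  have hle : volume (P ∪ Q) ≤ volume (Icc a b) := measure_mono (union_subset hPab hQab)
  rw [heq, Real.volume_Icc] at hle
  exact absurd (h.trans_le hle) (lt_irrefl _)



lemma exists_density_window {A : Set ℝ} (hA : MeasurableSet A) (hpos : 0 < volume A) :
    ∃ x₀ ∈ A, ∃ r : ℝ, 0 < r ∧ r ≤ 1 ∧
      ENNReal.ofReal (3/2 * r) < volume (A ∩ Icc (x₀ - r) (x₀ + r)) := by
  have hae := Besicovitch.ae_tendsto_measure_inter_div volume A
  have hA' : ∀ᵐ x ∂(volume.restrict A), x ∈ A := ae_restrict_mem hA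
  have hne : volume.restrict A ≠ 0 := by
    intro h
    have := Measure.restrict_apply_univ A (μ := volume)
    rw [h] at this; simp at this; exact hpos.ne' this.symm
  have : (MeasureTheory.ae (volume.restrict A)).NeBot := ae_neBot.mpr hne
  obtain ⟨x₀, htend, hx₀⟩ := (hae.and hA').exists
  have h34 : ∀ᶠ r in nhdsWithin 0 (Set.Ioi (0:ℝ)),
      (3/4 : ENNReal) < volume (A ∩ closedBall x₀ r) / volume (closedBall x₀ r) :=
    htend.eventually (eventually_gt_nhds (by
      rw [ENNReal.div_lt_iff (Or.inl (by norm_num)) (Or.inl (by norm_num))]; norm_num))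
  have hIoc : Set.Ioc (0:ℝ) 1 ∈ nhdsWithin 0 (Set.Ioi (0:ℝ)) :=
    Ioc_mem_nhdsGT_of_mem ⟨le_refl 0, zero_lt_one⟩
  obtain ⟨r, hr34, hrmem⟩ := (h34.and (eventually_of_mem hIoc (fun x hx => hx))).exists
  obtain ⟨hr0, hr1⟩ := hrmem
  refine ⟨x₀, hx₀, r, hr0, hr1, ?_⟩
  rw [Real.volume_closedBall] at hr34
  have hb0 : ENNReal.ofReal (2*r) ≠ 0 := by
    rw [Ne, ENNReal.ofReal_eq_zero, not_le]; linarith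
  have hbt : ENNReal.ofReal (2*r) ≠ ⊤ := ENNReal.ofReal_ne_top
  rw [ENNReal.lt_div_iff_mul_lt (Or.inl hb0) (Or.inl hbt)] at hr34
  have heq : (3/4 : ENNReal) * ENNReal.ofReal (2*r) = ENNReal.ofReal (3/2 * r) := by
    rw [show (3/4 : ENNReal) = ENNReal.ofReal (3/4) by
          rw [ENNReal.ofReal_div_of_pos (by norm_num)]; norm_num,
        ← ENNReal.ofReal_mul (by norm_num)]
    ring_nf
  rw [heq] at hr34
  rwa [Real.closedBall_eq_Icc] at hr34

lemma exists_sumset_ball {A : Set ℝ} (hA : MeasurableSet A) (hpos : 0 < volume A) :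
    ∃ x₀ ∈ A, ∃ η : ℝ, 0 < η ∧
      ∀ t : ℝ, |t - 2*x₀| < η → ∃ a₁ ∈ A, ∃ a₂ ∈ A, a₁ + a₂ = t := by
  obtain ⟨x₀, hx₀, r, hr0, hr1, hvol⟩ := exists_density_window hA hpos
  set W := A ∩ Icc (x₀ - r) (x₀ + r) with hW
  have hWmeas : MeasurableSet W := hA.inter measurableSet_Icc
  have hWfin : volume W ≠ ⊤ := by
    refine ne_top_of_le_ne_top ?_ (measure_mono (inter_subset_right))
    rw [Real.volume_Icc]; exact ENNReal.ofReal_ne_top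
  set s := (volume W).toReal with hs
  have hWs : volume W = ENNReal.ofReal s := (ENNReal.ofReal_toReal hWfin).symm
  have hs32 : 3/2 * r < s := by
    rw [hWs] at hvol
    exact (ENNReal.ofReal_lt_ofReal_iff_of_nonneg (by positivity)).mp hvol
  refine ⟨x₀, hx₀, 2*(s - r), by linarith, fun t ht => ?_⟩
  set Q := (fun x => t - x) ⁻¹' W with hQ
  set a := min (x₀ - r) (t - x₀ - r) with ha
  set b := max (x₀ + r) (t - x₀ + r) with hb
  have hba : b - a = |t - 2*x₀| + 2*r := by
    rw [ha, hb]
    rcases le_total x₀ (t - x₀) with h | h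
    · rw [min_eq_left (by linarith), max_eq_right (by linarith), abs_of_nonneg (by linarith)]
      ring
    · rw [min_eq_right (by linarith), max_eq_left (by linarith), abs_of_nonpos (by linarith)]
      ring
  have hPab : W ⊆ Icc a b := fun x hx => by
    obtain ⟨-, h1, h2⟩ := hx
    exact ⟨le_trans (min_le_left _ _) h1, le_trans h2 (le_max_left _ _)⟩
  have hQab : Q ⊆ Icc a b := fun x hx => by
    have hx' : t - x ∈ W := hx
    obtain ⟨-, h1, h2⟩ := hx'
    constructor
    · exact le_trans (min_le_right _ _) (by linarith)
    · exact le_trans (by linarith) (le_max_right _ _)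
  have hsum : ENNReal.ofReal (b - a) < volume W + volume Q := by
    rw [hQ, neg_translate_volume, hWs, ← ENNReal.ofReal_add (by positivity) (by positivity)]
    apply (ENNReal.ofReal_lt_ofReal_iff_of_nonneg (by linarith [abs_nonneg (t - 2*x₀)])).mpr
    rw [hba]; linarith
  obtain ⟨w, hwW, hwQ⟩ := hull_inter_nonempty hWmeas hPab hQab hsum
  have hw1 : w ∈ A := hwW.1
  have hw2 : t - w ∈ A := (show t - w ∈ W from hwQ).1
  exact ⟨w, hw1, t - w, hw2, by ring⟩


noncomputable def psi (d : ℝ) (p : ℕ) (x : ℝ) : ℤ := ⌊x * p / d⌋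

noncomputable def phi (d : ℝ) (p : ℕ) (x : ℝ) : ZMod p := ((psi d p x : ℤ) : ZMod p)

lemma psi_add (d : ℝ) (hd : 0 < d) (p : ℕ) (x y : ℝ) :
    ∃ c : ℤ, (c = 0 ∨ c = 1) ∧ psi d p (x + y) = psi d p x + psi d p y + c := by
  unfold psi
  have hsplit : (x + y) * p / d = x * p / d + y * p / d := by ring
  rw [hsplit]
  set a := x * p / d
  set b := y * p / d
  have h1 : ⌊a⌋ + ⌊b⌋ ≤ ⌊a + b⌋ := by
    apply Int.le_floor.mpr
    push_cast
    exact add_le_add (Int.floor_le a) (Int.floor_le b)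
  have h2 : ⌊a + b⌋ - 1 ≤ ⌊a⌋ + ⌊b⌋ := Int.le_floor_add_floor a b
  refine ⟨⌊a + b⌋ - ⌊a⌋ - ⌊b⌋, ?_, by ring⟩
  omega

lemma psi_bounds (d : ℝ) (hd : 0 < d) (p : ℕ) (hp : 0 < p) (x : ℝ) :
    (psi d p x : ℝ) * (d / p) ≤ x ∧ x < ((psi d p x : ℝ) + 1) * (d / p) := by
  have hdp : (0:ℝ) < d / p := div_pos hd (by exact_mod_cast hp)
  have hpd : (0:ℝ) < (p:ℝ) / d := div_pos (by exact_mod_cast hp) hd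
  have h1 : (psi d p x : ℝ) ≤ x * p / d := Int.floor_le _
  have h2 : x * p / d < (psi d p x : ℝ) + 1 := Int.lt_floor_add_one _
  constructor
  · have := mul_le_mul_of_nonneg_right h1 hdp.le
    calc (psi d p x : ℝ) * (d / p) ≤ (x * p / d) * (d / p) := this
      _ = x := by field_simp
  · have := mul_lt_mul_of_pos_right h2 hdp
    calc x = (x * p / d) * (d / p) := by field_simp
      _ < ((psi d p x : ℝ) + 1) * (d / p) := this

def Fsum {p : ℕ} (F : Finset (ZMod p)) : ℕ → Finset (ZMod p)
  | 0 => {0}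
  | n+1 => F + Fsum F n

lemma Fsum_card {p : ℕ} (hp : p.Prime) {F : Finset (ZMod p)} (hF : F.Nonempty) :
    ∀ n : ℕ, 1 ≤ n → min p (n * (F.card - 1) + 1) ≤ (Fsum F n).card := by
  intro n
  induction n with
  | zero => omega
  | succ n ih =>
      intro _
      rcases Nat.eq_zero_or_pos n with rfl | hn
      · show min p (1 * (F.card - 1) + 1) ≤ (F + Fsum F 0).card
        have h1 : F.card ≤ (F + Fsum F 0).card := by
          have : F + Fsum F 0 = F + {0} := rfl
          rw [this]
          simp
        have hc : 1 * (F.card - 1) + 1 = F.card := by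
          have := hF.card_pos; omega
        omega
      · have hind := ih hn
        have hne : (Fsum F n).Nonempty := Finset.card_pos.mp (by
          have : 0 < min p (n * (F.card - 1) + 1) := by
            have := hp.pos; omega
          omega)
        have hcd := ZMod.cauchy_davenport hp hF hne
        show min p ((n+1) * (F.card - 1) + 1) ≤ (F + Fsum F n).card
        have hFc := hF.card_pos
        rcases le_or_gt p (n * (F.card - 1) + 1) with h | h
        · -- Fsum already ≥ p
          have h1 : p ≤ (Fsum F n).card := by omega
          have : min p (F.card + (Fsum F n).card - 1) = p ∨
              p ≤ F.card + (Fsum F n).card - 1 := by omega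
          omega
        · have h1 : n * (F.card - 1) + 1 ≤ (Fsum F n).card := by omega
          have : F.card + (Fsum F n).card - 1 ≥ (n+1) * (F.card - 1) + 1 := by
            have : (n+1) * (F.card - 1) = n * (F.card - 1) + (F.card - 1) := by ring
            omega
          omega

lemma hitting {d : ℝ} (hd : 0 < d) {p : ℕ} {B : Set ℝ} {F : Finset (ZMod p)}
    (hFB : ∀ j ∈ F, ∃ x ∈ B, phi d p x = j) :
    ∀ n : ℕ, 1 ≤ n → ∀ ζ ∈ Fsum F n, ∃ y ∈ foldSum n B, ∃ c : ℤ,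
      0 ≤ c ∧ c ≤ (n : ℤ) - 1 ∧ phi d p y = ζ + (c : ZMod p) := by
  intro n
  induction n with
  | zero => omega
  | succ n ih =>
      intro _ ζ hζ
      rcases Nat.eq_zero_or_pos n with rfl | hn
      · -- n+1 = 1 : Fsum F 1 = F + {0}
        have hζ' : ζ ∈ F + ({0} : Finset (ZMod p)) := hζ
        rw [Finset.mem_add] at hζ'
        obtain ⟨j, hj, z, hz, rfl⟩ := hζ'
        rw [Finset.mem_singleton] at hz
        subst hz
        obtain ⟨x, hxB, hφ⟩ := hFB j hj
        refine ⟨x + 0, ?_, 0, by norm_num, by norm_num, by simpa using hφ⟩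
        exact Set.add_mem_add hxB rfl
      · have hζ' : ζ ∈ F + Fsum F n := hζ
        rw [Finset.mem_add] at hζ'
        obtain ⟨j, hj, ζ', hζ', rfl⟩ := hζ'
        obtain ⟨x, hxB, hφx⟩ := hFB j hj
        obtain ⟨y', hy', c', hc'0, hc'1, hφy'⟩ := ih hn ζ' hζ'
        obtain ⟨cc, hcc01, hccψ⟩ := psi_add d hd p x y'
        refine ⟨x + y', Set.add_mem_add hxB hy', c' + cc, by rcases hcc01 with h|h <;> omega,
          by push_cast; rcases hcc01 with h|h <;> omega, ?_⟩
        show ((psi d p (x + y') : ℤ) : ZMod p) = j + ζ' + ((c' + cc : ℤ) : ZMod p)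
        rw [hccψ]
        push_cast
        rw [show ((psi d p x : ℤ) : ZMod p) = j from hφx,
            show ((psi d p y' : ℤ) : ZMod p) = ζ' + (c' : ZMod p) from hφy']
        ring

lemma piece_le {d : ℝ} (hd : 0 < d) {p : ℕ} (hp : 0 < p) (B : Set ℝ) (k : ℤ) (j : ZMod p) :
    volume (B ∩ Ico ((k:ℝ)*d) (((k:ℝ)+1)*d) ∩ phi d p ⁻¹' {j}) ≤ ENNReal.ofReal (d/p) := by
  set S := B ∩ Ico ((k:ℝ)*d) (((k:ℝ)+1)*d) ∩ phi d p ⁻¹' {j} with hS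
  rcases S.eq_empty_or_nonempty with h | ⟨x₀, hx₀⟩
  · rw [h]; simp
  have hpsi_eq : ∀ y ∈ S, psi d p y = psi d p x₀ := by
    have key : ∀ y ∈ S, (k*p : ℤ) ≤ psi d p y ∧ psi d p y < k*p + p := by
      intro y hy
      obtain ⟨⟨-, hy1, hy2⟩, -⟩ := hy
      constructor
      · apply Int.le_floor.mpr
        push_cast
        rw [le_div_iff₀ hd]
        calc (k:ℝ) * p * d = ((k:ℝ) * d) * p := by ring
          _ ≤ y * p := by
              apply mul_le_mul_of_nonneg_right hy1 (by positivity)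
      · apply Int.floor_lt.mpr
        push_cast
        rw [div_lt_iff₀ hd]
        calc y * p < (((k:ℝ)+1) * d) * p := by
              apply mul_lt_mul_of_pos_right hy2 (by exact_mod_cast hp)
          _ = ((k:ℝ) * p + p) * d := by ring
    intro y hy
    have h1 := key y hy
    have h2 := key x₀ hx₀
    have hmod : phi d p y = phi d p x₀ := by
      have hj1 : phi d p y = j := hy.2
      have hj2 : phi d p x₀ = j := hx₀.2
      rw [hj1, hj2]
    have hdvd : (p:ℤ) ∣ psi d p x₀ - psi d p y := by
      have := (ZMod.intCast_eq_intCast_iff _ _ _).mp hmod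
      exact Int.ModEq.dvd this
    have := Int.eq_zero_of_abs_lt_dvd hdvd (by
      rw [abs_lt]
      constructor <;> omega)
    omega
  have hsub : S ⊆ Ico ((psi d p x₀ : ℝ) * (d/p)) (((psi d p x₀ : ℝ) + 1) * (d/p)) := by
    intro y hy
    have heq := hpsi_eq y hy
    have hb := psi_bounds d hd p hp y
    rw [heq] at hb
    exact ⟨hb.1, hb.2⟩
  calc volume S ≤ volume (Ico ((psi d p x₀ : ℝ) * (d/p)) (((psi d p x₀ : ℝ) + 1) * (d/p))) :=
        measure_mono hsub
    _ = ENNReal.ofReal (d/p) := by rw [Real.volume_Ico]; ring_nf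

lemma card_F_lower {d ε : ℝ} (hd : 0 < d) (hd1 : d ≤ 1) {p : ℕ} (hp : 0 < p)
    {B : Set ℝ} (hB : B ⊆ Icc (-1) 1) (hε : ENNReal.ofReal ε ≤ volume B)
    {F : Finset (ZMod p)} (hBF : ∀ x ∈ B, phi d p x ∈ F) :
    ε ≤ (2 * ((⌈1/d⌉₊ : ℕ) : ℝ) + 1) * F.card * (d / p) := by
  set K : ℕ := ⌈1/d⌉₊ with hK
  set Kset : Finset ℤ := Finset.Icc (-(K:ℤ)) K with hKset
  have hKd : 1 ≤ (K:ℝ) * d := by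
    have h1 : (1:ℝ)/d ≤ (K:ℝ) := Nat.le_ceil (1/d)
    calc (1:ℝ) = (1/d) * d := by field_simp
      _ ≤ (K:ℝ) * d := mul_le_mul_of_nonneg_right h1 hd.le
  have hcover : B ⊆ ⋃ k ∈ Kset, ⋃ j ∈ F, (B ∩ Ico ((k:ℝ)*d) (((k:ℝ)+1)*d) ∩ phi d p ⁻¹' {j}) := by
    intro x hx
    have hx1 := hB hx
    set k : ℤ := ⌊x/d⌋ with hk
    have hk1 : (k:ℝ) ≤ x/d := Int.floor_le _
    have hk2 : x/d < (k:ℝ) + 1 := Int.lt_floor_add_one _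
    have hkmem : k ∈ Kset := by
      rw [hKset, Finset.mem_Icc]
      constructor
      · apply Int.le_floor.mpr
        push_cast
        rw [le_div_iff₀ hd]
        nlinarith [hx1.1]
      · have h2 : (k:ℝ) ≤ (K:ℝ) := by
          have h3 : x/d ≤ 1/d := by gcongr; exact hx1.2
          have h4 : (1:ℝ)/d ≤ (K:ℝ) := Nat.le_ceil (1/d)
          linarith
        exact_mod_cast h2
    have hxk : x ∈ Ico ((k:ℝ)*d) (((k:ℝ)+1)*d) := by
      constructor
      · calc (k:ℝ)*d ≤ (x/d)*d := mul_le_mul_of_nonneg_right hk1 hd.le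
          _ = x := by field_simp
      · calc x = (x/d)*d := by field_simp
          _ < ((k:ℝ)+1)*d := mul_lt_mul_of_pos_right hk2 hd
    refine Set.mem_biUnion hkmem (Set.mem_biUnion (hBF x hx) ?_)
    exact ⟨⟨hx, hxk⟩, rfl⟩
  have hstep : volume B ≤ (Kset.card : ENNReal) * ((F.card : ENNReal) * ENNReal.ofReal (d/p)) := by
    calc volume B ≤ volume (⋃ k ∈ Kset, ⋃ j ∈ F,
          (B ∩ Ico ((k:ℝ)*d) (((k:ℝ)+1)*d) ∩ phi d p ⁻¹' {j})) := measure_mono hcover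
      _ ≤ ∑ k ∈ Kset, volume (⋃ j ∈ F,
          (B ∩ Ico ((k:ℝ)*d) (((k:ℝ)+1)*d) ∩ phi d p ⁻¹' {j})) := measure_biUnion_finset_le _ _
      _ ≤ ∑ k ∈ Kset, ∑ j ∈ F,
          volume (B ∩ Ico ((k:ℝ)*d) (((k:ℝ)+1)*d) ∩ phi d p ⁻¹' {j}) := by
            apply Finset.sum_le_sum
            intro k _
            exact measure_biUnion_finset_le _ _
      _ ≤ ∑ k ∈ Kset, ∑ j ∈ F, ENNReal.ofReal (d/p) := by
            apply Finset.sum_le_sum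
            intro k _
            apply Finset.sum_le_sum
            intro j _
            exact piece_le hd hp B k j
      _ = (Kset.card : ENNReal) * ((F.card : ENNReal) * ENNReal.ofReal (d/p)) := by
            simp [Finset.sum_const, nsmul_eq_mul, mul_assoc]
  have hcard : (Kset.card : ℝ) = 2*(K:ℝ)+1 := by
    rw [hKset, Int.card_Icc]
    have : ((K:ℤ) + 1 - -(K:ℤ)).toNat = 2*K+1 := by omega
    rw [this]; push_cast; ring
  have hRHS : (Kset.card : ENNReal) * ((F.card : ENNReal) * ENNReal.ofReal (d/p))
      = ENNReal.ofReal ((Kset.card : ℝ) * ((F.card : ℝ) * (d/p))) := by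
    rw [ENNReal.ofReal_mul (by positivity), ENNReal.ofReal_mul (by positivity)]
    simp [ENNReal.ofReal_natCast]
  have := hε.trans hstep
  rw [hRHS] at this
  have hfinal : ε ≤ (Kset.card : ℝ) * ((F.card : ℝ) * (d/p)) := by
    have h0 : (0:ℝ) ≤ (Kset.card : ℝ) * ((F.card : ℝ) * (d/p)) := by positivity
    exact (ENNReal.ofReal_le_ofReal_iff h0).mp this
  rw [hcard] at hfinal
  calc ε ≤ (2*(K:ℝ)+1) * ((F.card : ℝ) * (d/p)) := hfinal
    _ = (2 * ((K:ℕ):ℝ) + 1) * (F.card : ℝ) * (d/p) := by ring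


set_option maxHeartbeats 2000000 in
/-- If `A ⊆ [0,1]` is measurable with `λ(A) ≥ ε > 0`, then there are `k = O(1/ε²)`
(with `k ≥ 1`) and `b ∈ ℝ` such that `[0,1] ⊆ kA + b`. -/
theorem covering_interval_by_iterated_sumset :
    ∃ C : ℝ, 0 < C ∧ ∀ (ε : ℝ) (A : Set ℝ), 0 < ε →
      A ⊆ Set.Icc 0 1 → MeasurableSet A → ENNReal.ofReal ε ≤ volume A →
      ∃ (k : ℕ) (b : ℝ), 1 ≤ k ∧ (k : ℝ) ≤ C / ε ^ 2 ∧
        Set.Icc (0 : ℝ) 1 ⊆ foldSum k A + {b} := by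
  refine ⟨100, by norm_num, ?_⟩
  intro ε A hε hsub hmeas hvol
  -- ε ≤ 1
  have hε1 : ε ≤ 1 := by
    have h1 : volume A ≤ volume (Icc (0:ℝ) 1) := measure_mono hsub
    rw [Real.volume_Icc] at h1
    have h2 := hvol.trans h1
    have h3 := (ENNReal.ofReal_le_ofReal_iff (by norm_num : (0:ℝ) ≤ 1 - 0)).mp h2
    linarith
  have hvolpos : 0 < volume A := lt_of_lt_of_le (ENNReal.ofReal_pos.mpr hε) hvol
  have hAne : A.Nonempty := by
    rcases A.eq_empty_or_nonempty with h | h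
    · rw [h] at hvolpos; simp at hvolpos
    · exact h
  -- two far-apart points u v of A
  have hbddA : BddAbove A ∧ BddBelow A := by
    constructor
    · exact ⟨1, fun x hx => (hsub hx).2⟩
    · exact ⟨0, fun x hx => (hsub hx).1⟩
  have hAIcc : A ⊆ Icc (sInf A) (sSup A) := fun x hx =>
    ⟨csInf_le hbddA.2 hx, le_csSup hbddA.1 hx⟩
  have hgap : ε ≤ sSup A - sInf A := by
    have h1 : volume A ≤ volume (Icc (sInf A) (sSup A)) := measure_mono hAIcc
    rw [Real.volume_Icc] at h1
    have h2 := hvol.trans h1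
    obtain ⟨a0, ha0⟩ := hAne
    have ha0' := hAIcc ha0
    have hss : 0 ≤ sSup A - sInf A := by
      have := ha0'.1; have := ha0'.2; linarith
    by_contra hcon
    push_neg at hcon
    have h3 : ENNReal.ofReal (sSup A - sInf A) < ENNReal.ofReal ε :=
      ENNReal.ofReal_lt_ofReal_iff_of_nonneg hss |>.mpr hcon
    exact absurd (h2.trans_lt h3) (lt_irrefl _)
  obtain ⟨u, huA, hu⟩ := Real.lt_sInf_add_pos hAne (by positivity : 0 < ε/4)
  obtain ⟨v, hvA, hv⟩ := Real.add_neg_lt_sSup hAne (by linarith : -(ε/4) < 0)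
  set d : ℝ := v - u with hd_def
  have hu01 := hsub huA
  have hv01 := hsub hvA
  have hd2 : ε/2 ≤ d := by
    have := hu01; have := hv01
    simp only [hd_def]
    linarith
  have hd : 0 < d := by linarith
  have hd1 : d ≤ 1 := by simp only [hd_def]; linarith [hu01.1, hv01.2]
  -- translated set B
  set B : Set ℝ := (· + u) ⁻¹' A with hB_def
  have hmeasB : MeasurableSet B := hmeas.preimage (measurable_add_const u)
  have hvolB : volume B = volume A := measure_preimage_add_right volume u A
  have hB0 : (0:ℝ) ∈ B := by
    simp only [hB_def, Set.mem_preimage, zero_add]; exact huA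
  have hBd : d ∈ B := by
    simp only [hB_def, hd_def, Set.mem_preimage, sub_add_cancel]; exact hvA
  have hBsub : B ⊆ Icc (-1) 1 := by
    intro x hx
    have : x + u ∈ A := hx
    have h2 := hsub this
    constructor <;> [linarith [h2.1, hu01.2]; linarith [h2.2, hu01.1]]
  have hvolBpos : 0 < volume B := by rw [hvolB]; exact hvolpos
  have hvolBε : ENNReal.ofReal ε ≤ volume B := by rw [hvolB]; exact hvol
  -- interval in B + B
  obtain ⟨x₀, hx₀B, η, hη, hball⟩ := exists_sumset_ball hmeasB hvolBpos
  have hx₀1 : |x₀| ≤ 1 := by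
    have := hBsub hx₀B; rw [abs_le]; exact ⟨this.1, this.2⟩
  set η' : ℝ := min η 2 with hη'_def
  have hη' : 0 < η' := lt_min hη (by norm_num)
  have hη'2 : η' ≤ 2 := min_le_right _ _
  have hη'η : η' ≤ η := min_le_left _ _
  -- choice of n and prime p
  set n : ℕ := ⌈(10:ℝ)/ε⌉₊ with hn_def
  have hn10 : 10/ε ≤ (n:ℝ) := Nat.le_ceil _
  have hn1 : 1 ≤ n := by
    have h10 : (1:ℝ) ≤ 10/ε := by
      rw [le_div_iff₀ hε]; linarith
    have : (1:ℝ) ≤ (n:ℝ) := h10.trans hn10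
    exact_mod_cast this
  have hnle : (n:ℝ) ≤ 20/ε := by
    have h1 : ((n:ℕ):ℝ) < 10/ε + 1 := Nat.ceil_lt_add_one (by positivity)
    have h2 : (1:ℝ) ≤ 10/ε := by rw [le_div_iff₀ hε]; linarith
    have h3 : (20:ℝ)/ε = 10/ε + 10/ε := by ring
    linarith
  obtain ⟨p, hp_ge, hp_prime⟩ :=
    Nat.exists_infinite_primes (max (⌈10/ε⌉₊ + 1) (⌈((n:ℝ)+1)*d/η'⌉₊ + 1))
  haveI : NeZero p := ⟨hp_prime.pos.ne'⟩
  have hp_pos : 0 < p := hp_prime.pos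
  have hp10 : 10/ε ≤ (p:ℝ) := by
    have h1 : ⌈10/ε⌉₊ + 1 ≤ p := le_trans (le_max_left _ _) hp_ge
    have h2 : (⌈10/ε⌉₊ : ℝ) ≤ p := by exact_mod_cast le_trans (Nat.le_succ _) h1
    exact (Nat.le_ceil _).trans h2
  have hp0R : (0:ℝ) < p := by exact_mod_cast hp_pos
  have hpη : ((n:ℝ)+1)*d/p < η' := by
    have h1 : ⌈((n:ℝ)+1)*d/η'⌉₊ + 1 ≤ p := le_trans (le_max_right _ _) hp_ge
    have h3 : (((n:ℝ)+1)*d/η') ≤ (⌈((n:ℝ)+1)*d/η'⌉₊ : ℝ) := Nat.le_ceil _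
    have h4 : ((⌈((n:ℝ)+1)*d/η'⌉₊ : ℕ) : ℝ) + 1 ≤ (p:ℝ) := by exact_mod_cast h1
    have h2 : ((n:ℝ)+1)*d/η' < p := by linarith
    rw [div_lt_iff₀ hη'] at h2
    rw [div_lt_iff₀ hp0R]
    linarith
  -- the finset of residues
  set F : Finset (ZMod p) := (Set.toFinite ((phi d p) '' B)).toFinset with hF_def
  have hBF : ∀ x ∈ B, phi d p x ∈ F := by
    intro x hx
    rw [hF_def, Set.Finite.mem_toFinset]
    exact ⟨x, hx, rfl⟩
  have hFB : ∀ j ∈ F, ∃ x ∈ B, phi d p x = j := by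
    intro j hj
    rw [hF_def, Set.Finite.mem_toFinset] at hj
    obtain ⟨x, hx, hφ⟩ := hj
    exact ⟨x, hx, hφ⟩
  have hFne : F.Nonempty := ⟨phi d p 0, hBF 0 hB0⟩
  clear_value F
  -- cardinality lower bound
  have hcardF : ε ≤ (2 * ((⌈1/d⌉₊ : ℕ) : ℝ) + 1) * F.card * (d / p) :=
    card_F_lower hd hd1 hp_pos hBsub hvolBε hBF
  have hceil : ((⌈1/d⌉₊ : ℕ) : ℝ) ≤ 1/d + 1 := le_of_lt (Nat.ceil_lt_add_one (by positivity))
  have hF5 : ε * p / 5 ≤ (F.card : ℝ) := by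
    have h1 : (2 * ((⌈1/d⌉₊ : ℕ) : ℝ) + 1) * d ≤ 5 := by
      have : (2 * (1/d + 1) + 1) * d = 2 + 3*d := by field_simp; ring
      nlinarith
    have h2 : ε ≤ 5 * F.card / p := by
      have hFc : (0:ℝ) ≤ (F.card:ℝ) := by positivity
      calc ε ≤ (2 * ((⌈1/d⌉₊ : ℕ) : ℝ) + 1) * F.card * (d / p) := hcardF
        _ = ((2 * ((⌈1/d⌉₊ : ℕ) : ℝ) + 1) * d) * F.card / p := by ring
        _ ≤ 5 * F.card / p := by
            rw [div_le_div_iff_of_pos_right hp0R]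
            exact mul_le_mul_of_nonneg_right h1 hFc
    rw [le_div_iff₀ hp0R] at h2
    rw [div_le_iff₀ (by norm_num : (0:ℝ) < 5)]
    linarith
  -- Fsum F n = univ
  have hFsum_univ : ∀ ζ : ZMod p, ζ ∈ Fsum F n := by
    have hcard := Fsum_card hp_prime hFne n hn1
    have hpcard : p ≤ n * (F.card - 1) + 1 := by
      -- real estimate
      have hF1 : (1:ℝ) ≤ (F.card:ℝ) := by
        have := hFne.card_pos
        exact_mod_cast this
      have hεp10 : (1:ℝ) ≤ ε * p / 10 := by
        rw [le_div_iff₀ (by norm_num : (0:ℝ) < 10)]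
        rw [div_le_iff₀ hε] at hp10
        nlinarith
      have hF2 : ε * p / 10 ≤ (F.card:ℝ) - 1 := by
        have : ε * p / 5 - 1 ≥ ε * p / 10 := by nlinarith [hεp10]
        linarith [hF5]
      have hreal : (p:ℝ) ≤ (n:ℝ) * ((F.card:ℝ) - 1) := by
        have hnn : (0:ℝ) ≤ (F.card:ℝ) - 1 := by linarith
        calc (p:ℝ) = (10/ε) * (ε * p / 10) := by field_simp
          _ ≤ (n:ℝ) * ((F.card:ℝ) - 1) := by
              apply mul_le_mul hn10 hF2 (by positivity) (by positivity)
      have hcast : ((F.card - 1 : ℕ) : ℝ) = (F.card:ℝ) - 1 := by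
        have := hFne.card_pos
        push_cast [Nat.cast_sub this]
        ring
      have : (p:ℝ) ≤ (n:ℝ) * ((F.card - 1 : ℕ):ℝ) := by rw [hcast]; exact hreal
      have hnat : p ≤ n * (F.card - 1) := by exact_mod_cast this
      omega
    have hge : p ≤ (Fsum F n).card := by
      rwa [min_eq_left hpcard] at hcard
    have huniv : Fsum F n = Finset.univ := by
      apply Finset.eq_univ_of_card
      apply le_antisymm (Finset.card_le_univ _)
      rw [ZMod.card p]; exact hge
    intro ζ; rw [huniv]; exact Finset.mem_univ ζ
  -- parameters for the final covering
  set k₀ : ℕ := ⌈((n:ℝ)+5)/d⌉₊ + 1 with hk₀_def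
  set M : ℕ := n + 2 + 2*k₀ with hM_def
  have hk₀_ge : ((n:ℝ)+5)/d ≤ ((k₀:ℕ):ℝ) - 1 := by
    have h1 : (((n:ℝ)+5)/d) ≤ (⌈((n:ℝ)+5)/d⌉₊ : ℝ) := Nat.le_ceil _
    have h2 : ((k₀:ℕ):ℝ) = (⌈((n:ℝ)+5)/d⌉₊ : ℝ) + 1 := by rw [hk₀_def]; push_cast; ring
    linarith
  -- the covering claim
  have hcover : ∀ t ∈ Icc (0:ℝ) 1, t + (k₀:ℝ)*d + (M:ℝ)*u ∈ foldSum M A := by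
    intro t ht
    set τ : ℝ := t - 2*x₀ with hτ_def
    obtain ⟨y, hy, c, hc0, hc1, hφy⟩ :=
      hitting hd hFB n hn1 (phi d p τ + 1) (hFsum_univ _)
    set i : ℤ := 1 + c with hi_def
    have hi1 : 1 ≤ i := by omega
    have hin : i ≤ (n:ℤ) := by omega
    -- extract m
    have hφy' : ((psi d p y - psi d p τ - i : ℤ) : ZMod p) = 0 := by
      push_cast
      rw [show ((psi d p y : ℤ) : ZMod p) = phi d p τ + 1 + ((c:ℤ) : ZMod p) from hφy]
      show phi d p τ + 1 + ((c:ℤ) : ZMod p) - ((psi d p τ : ℤ) : ZMod p) - ((1 + c : ℤ) : ZMod p) = 0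
      show phi d p τ + 1 + ((c:ℤ) : ZMod p) - phi d p τ - ((1 + c : ℤ) : ZMod p) = 0
      push_cast
      ring
    have hdvd : (p:ℤ) ∣ psi d p y - psi d p τ - i :=
      (ZMod.intCast_zmod_eq_zero_iff_dvd _ _).mp hφy'
    obtain ⟨m, hm⟩ := hdvd
    have hψy : psi d p y = psi d p τ + i + p * m := by omega
    -- bounds on e
    set e : ℝ := y - τ - m*d with he_def
    have hby := psi_bounds d hd p hp_pos y
    have hbτ := psi_bounds d hd p hp_pos τ
    have hdp_pos : (0:ℝ) < d/p := div_pos hd hp0R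
    have he_low : 0 < e := by
      have h1 : (psi d p y : ℝ) = (psi d p τ : ℝ) + (i:ℝ) + (p:ℝ)*(m:ℝ) := by
        exact_mod_cast congrArg (Int.cast : ℤ → ℝ) hψy
      have h2 : (psi d p y : ℝ) * (d/p) ≤ y := hby.1
      have h3 : τ < ((psi d p τ : ℝ) + 1) * (d/p) := hbτ.2
      have h4 : (p:ℝ) * (m:ℝ) * (d/p) = (m:ℝ)*d := by field_simp
      have h5 : ((i:ℝ) - 1) * (d/p) < y - τ - (m:ℝ)*d := by nlinarith
      have h6 : (0:ℝ) ≤ ((i:ℝ) - 1) * (d/p) := by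
        apply mul_nonneg _ hdp_pos.le
        have : (1:ℝ) ≤ (i:ℝ) := by exact_mod_cast hi1
        linarith
      rw [he_def]; exact h6.trans_lt h5
    have he_high : e < η' := by
      have h1 : (psi d p y : ℝ) = (psi d p τ : ℝ) + (i:ℝ) + (p:ℝ)*(m:ℝ) := by
        exact_mod_cast congrArg (Int.cast : ℤ → ℝ) hψy
      have h2 : y < ((psi d p y : ℝ) + 1) * (d/p) := hby.2
      have h3 : (psi d p τ : ℝ) * (d/p) ≤ τ := hbτ.1
      have h4 : (p:ℝ) * (m:ℝ) * (d/p) = (m:ℝ)*d := by field_simp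
      have h5 : y - τ - (m:ℝ)*d < ((i:ℝ) + 1) * (d/p) := by nlinarith
      have h6 : ((i:ℝ) + 1) * (d/p) ≤ ((n:ℝ) + 1) * (d/p) := by
        apply mul_le_mul_of_nonneg_right _ hdp_pos.le
        have : (i:ℝ) ≤ (n:ℝ) := by exact_mod_cast hin
        linarith
      have h7 : ((n:ℝ)+1) * (d/p) = ((n:ℝ)+1)*d/p := by ring
      rw [he_def]
      calc y - τ - (m:ℝ)*d < ((i:ℝ) + 1) * (d/p) := h5
        _ ≤ ((n:ℝ)+1) * (d/p) := h6
        _ < η' := by rw [h7]; exact hpη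
    -- interval point
    have hz : ∃ a₁ ∈ B, ∃ a₂ ∈ B, a₁ + a₂ = 2*x₀ - e := by
      apply hball
      have h1 : 2*x₀ - e - 2*x₀ = -e := by ring
      rw [h1, abs_neg, abs_of_pos he_low]
      exact he_high.trans_le hη'η
    obtain ⟨a₁, ha₁, a₂, ha₂, hz_eq⟩ := hz
    -- bound on m
    have hyIcc : y ∈ Icc (-(n:ℝ)) n := foldSum_subset_Icc hBsub n hy
    have hτ_bound : |τ| ≤ 3 := by
      rw [hτ_def, abs_le]
      obtain ⟨h1, h2⟩ := ht
      rw [abs_le] at hx₀1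
      constructor <;> nlinarith [hx₀1.1, hx₀1.2]
    have hm_bound : |(m:ℝ)| * d ≤ (n:ℝ) + 5 := by
      have h1 : (m:ℝ)*d = y - τ - e := by rw [he_def]; ring
      have h2 : |(m:ℝ)*d| ≤ |y| + |τ| + |e| := by
        rw [h1]; calc |y - τ - e| ≤ |y - τ| + |e| := abs_sub _ _
          _ ≤ |y| + |τ| + |e| := by linarith [abs_sub y τ]
      have h3 : |y| ≤ (n:ℝ) := by
        rw [abs_le]; exact ⟨hyIcc.1, hyIcc.2⟩
      have h4 : |e| ≤ 2 := by rw [abs_of_pos he_low]; linarith [he_high, hη'2]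
      have h5 : |(m:ℝ)*d| = |(m:ℝ)| * d := by rw [abs_mul, abs_of_pos hd]
      rw [← h5]; linarith
    have hm_k₀ : |(m:ℝ)| ≤ (k₀:ℝ) - 1 := by
      rw [← le_div_iff₀ hd] at hm_bound
      exact hm_bound.trans hk₀_ge
    have hmk : -(k₀:ℤ) ≤ m ∧ m ≤ (k₀:ℤ) := by
      rw [abs_le] at hm_k₀
      constructor
      · exact_mod_cast (by linarith [hm_k₀.1] : -((k₀:ℕ):ℝ) ≤ (m:ℝ))
      · exact_mod_cast (by linarith [hm_k₀.2] : (m:ℝ) ≤ ((k₀:ℕ):ℝ))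
    -- assemble membership
    set j : ℕ := ((k₀:ℤ) - m).toNat with hj_def
    have hj_cast : ((j:ℕ):ℤ) = (k₀:ℤ) - m := by
      rw [hj_def]; omega
    have hj_le : j ≤ 2*k₀ := by omega
    have hmem1 : y + a₁ ∈ foldSum (n+1) B := by
      have := mem_foldSum_add hy (mem_foldSum_one ha₁)
      simpa using this
    have hmem2 : y + a₁ + a₂ ∈ foldSum (n+2) B := by
      have := mem_foldSum_add hmem1 (mem_foldSum_one ha₂)
      simpa [add_assoc] using this
    have hmem3 : y + a₁ + a₂ + (j:ℝ)*d ∈ foldSum (n+2+j) B :=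
      mem_foldSum_add hmem2 (nsmul_mem_foldSum hBd j)
    have hmem4 : y + a₁ + a₂ + (j:ℝ)*d ∈ foldSum M B := by
      have h := foldSum_mono_index hB0 (2*k₀ - j) hmem3
      have : n + 2 + j + (2*k₀ - j) = M := by omega
      rwa [this] at h
    have hmem5 := mem_foldSum_translate hmem4
    have harith : y + a₁ + a₂ + (j:ℝ)*d + (M:ℝ)*u = t + (k₀:ℝ)*d + (M:ℝ)*u := by
      have hjr : ((j:ℕ):ℝ) = ((k₀:ℕ):ℝ) - (m:ℝ) := by exact_mod_cast hj_cast
      have h1 : a₁ + a₂ = 2*x₀ - e := hz_eq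
      have h2 : e = y - τ - (m:ℝ)*d := he_def
      have h3 : τ = t - 2*x₀ := hτ_def
      rw [hjr]
      linear_combination h1 + h2 + h3 + ((m:ℝ) - (m:ℝ)) * d
    rw [← harith]
    exact hmem5
  -- final assembly
  refine ⟨M, -((k₀:ℝ)*d) - (M:ℝ)*u, by omega, ?_, ?_⟩
  · -- size bound
    have hnε : (n:ℝ) * ε ≤ 11 := by
      have h1 : ((n:ℕ):ℝ) < 10/ε + 1 := Nat.ceil_lt_add_one (by positivity)
      have h2 : ((n:ℕ):ℝ) * ε < (10/ε + 1) * ε := by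
        apply mul_lt_mul_of_pos_right h1 hε
      have h3 : (10/ε + 1) * ε = 10 + ε := by field_simp
      nlinarith
    have hdε : (1/d) * ε ≤ 2 := by
      rw [div_mul_eq_mul_div, div_le_iff₀ hd]
      linarith
    have hk₀c : (k₀:ℝ) ≤ ((n:ℝ)+5)*(1/d) + 2 := by
      have h1 : (⌈((n:ℝ)+5)/d⌉₊ : ℝ) < ((n:ℝ)+5)/d + 1 := Nat.ceil_lt_add_one (by positivity)
      have h2 : ((k₀:ℕ):ℝ) = (⌈((n:ℝ)+5)/d⌉₊ : ℝ) + 1 := by rw [hk₀_def]; push_cast; ring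
      rw [h2]
      have : ((n:ℝ)+5)/d = ((n:ℝ)+5)*(1/d) := by ring
      linarith [this ▸ h1]
    have hd0 : (0:ℝ) ≤ (1/d)*ε := by positivity
    have hprod : ((n:ℝ)*ε + 5*ε) * ((1/d)*ε) ≤ 32 := by
      have hub : (n:ℝ)*ε + 5*ε ≤ 16 := by nlinarith
      calc ((n:ℝ)*ε + 5*ε) * ((1/d)*ε) ≤ 16 * ((1/d)*ε) := by
            apply mul_le_mul_of_nonneg_right hub hd0
        _ ≤ 16 * 2 := by nlinarith
        _ = 32 := by norm_num
    have hk₀ε : (k₀:ℝ) * ε^2 ≤ 34 := by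
      have h1 : (k₀:ℝ) * ε^2 ≤ (((n:ℝ)+5)*(1/d) + 2) * ε^2 := by nlinarith [sq_nonneg ε]
      have h2 : (((n:ℝ)+5)*(1/d) + 2) * ε^2 = ((n:ℝ)*ε + 5*ε) * ((1/d)*ε) + 2*ε^2 := by ring
      have hε2 : ε^2 ≤ 1 := by nlinarith
      nlinarith
    have hMr : (M:ℝ) = (n:ℝ) + 2 + 2*(k₀:ℝ) := by rw [hM_def]; push_cast; ring
    have hε2 : ε^2 ≤ 1 := by nlinarith
    have hMε : (M:ℝ) * ε^2 ≤ 100 := by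
      rw [hMr]
      have h1 : (n:ℝ)*ε^2 ≤ 11 := by nlinarith
      nlinarith
    rw [le_div_iff₀ (by positivity : (0:ℝ) < ε^2)]
    exact hMε
  · intro t ht
    have hmem := hcover t ht
    have hteq : t = (t + (k₀:ℝ)*d + (M:ℝ)*u) + (-((k₀:ℝ)*d) - (M:ℝ)*u) := by ring
    rw [hteq]
    exact Set.add_mem_add hmem rfl
end

section
/- Let A ⊆ ℝ^d be relatively dense and uniformly discrete, and suppose A - A ⊆ A + F for some finite set F ⊆ ℝ^d. Then A - A is uniformly discrete. -/
/-!
Since `A - A ⊆ A + F`, every difference of two elements of `A - A` lies in `A + G` with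
`G = F + (F - F)` finite. A translate of the uniformly discrete set `A` meets a ball in finitely
many points, so `A + G` has only finitely many points in the unit ball, and the nonzero ones
among them stay at a positive distance from `0`.
-/

open Pointwise Bornology Metric Topology

section PairwiseLeDist

variable {X : Type*} {s : Set X} {ε : ℝ}

theorem isDiscrete_of_pairwise_le_dist [PseudoMetricSpace X] (hε : 0 < ε)
    (hs : s.Pairwise fun x y => ε ≤ dist x y) : IsDiscrete s := by
  refine isDiscrete_iff_forall_mem_exists_isOpen.2 fun x hx => ⟨ball x ε, isOpen_ball, ?_⟩
  refine Set.eq_singleton_iff_unique_mem.2 ⟨⟨mem_ball_self hε, hx⟩, fun y ⟨hyx, hy⟩ => ?_⟩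
  by_contra hne
  exact (hs hy hx hne).not_gt (mem_ball.1 hyx)

theorem Set.Finite.of_pairwise_le_dist [MetricSpace X] [ProperSpace X] (hε : 0 < ε)
    (hs : s.Pairwise fun x y => ε ≤ dist x y) (hb : IsBounded s) : s.Finite := by
  simpa using finite_isBounded_inter_isClosed (isDiscrete_of_pairwise_le_dist hε hs) hb
    (isClosed_of_pairwise_le_dist hε hs)

end PairwiseLeDist

section NormedAddCommGroup

variable {E : Type*} [NormedAddCommGroup E]

theorem finite_add_inter_of_pairwise_le_dist [ProperSpace E] {A G K : Set E} {ε : ℝ}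
    (hε : 0 < ε) (hA : A.Pairwise fun x y => ε ≤ dist x y) (hG : G.Finite)
    (hK : IsBounded K) : ((A + G) ∩ K).Finite := by
  have hAK : (A ∩ (K - G)).Finite :=
    .of_pairwise_le_dist hε (hA.mono Set.inter_subset_left)
      ((hK.sub hG.isBounded).subset Set.inter_subset_right)
  refine (hAK.add hG).subset ?_
  rintro _ ⟨⟨a, ha, g, hg, rfl⟩, hK⟩
  exact ⟨a, ⟨ha, a + g, hK, g, hg, add_sub_cancel_right a g⟩, g, hg, rfl⟩

theorem exists_pos_forall_le_norm_of_finite_inter_closedBall {D : Set E}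
    (hD : (D ∩ closedBall 0 1).Finite) : ∃ r > 0, ∀ z ∈ D, z ≠ 0 → r ≤ ‖z‖ := by
  have hT : ((D ∩ closedBall 0 1) \ {0})ᶜ ∈ 𝓝 (0 : E) :=
    hD.sdiff.isClosed.isOpen_compl.mem_nhds fun h => h.2 rfl
  obtain ⟨ε, hε, hball⟩ := Metric.mem_nhds_iff.1 hT
  refine ⟨min ε 1, lt_min hε one_pos, fun z hz hz0 => ?_⟩
  by_cases hz1 : ‖z‖ ≤ 1
  · have hzT : z ∉ ball (0 : E) ε := fun h =>
      hball h ⟨⟨hz, mem_closedBall_zero_iff.2 hz1⟩, hz0⟩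
    exact (min_le_left _ _).trans (by simpa using hzT)
  · exact (min_le_right _ _).trans (le_of_not_ge hz1)

end NormedAddCommGroup

theorem Set.sub_sub_sub_subset_add {G : Type*} [AddCommGroup G] {A F : Set G}
    (h : A - A ⊆ A + F) : (A - A) - (A - A) ⊆ A + (F + (F - F)) :=
  calc (A - A) - (A - A) ⊆ (A + F) - (A + F) := Set.sub_subset_sub h h
    _ = (A - A) + (F - F) := add_sub_add_comm A F A F
    _ ⊆ (A + F) + (F - F) := Set.add_subset_add_right h
    _ = A + (F + (F - F)) := add_assoc A F (F - F)

theorem diff_set_uniformly_discrete_general (d : ℕ) (A F : Set (Fin d → ℝ))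
    (hdisc : ∃ r > 0, ∀ a ∈ A, ∀ b ∈ A, a ≠ b → r ≤ dist a b)
    (hF : F.Finite) (hAF : A - A ⊆ A + F) :
    ∃ r > 0, ∀ x ∈ A - A, ∀ y ∈ A - A, x ≠ y → r ≤ dist x y := by
  obtain ⟨ε, hε, hA⟩ := hdisc
  have hfin : ((A + (F + (F - F))) ∩ closedBall 0 1).Finite :=
    finite_add_inter_of_pairwise_le_dist hε hA (hF.add (hF.sub hF)) isBounded_closedBall
  obtain ⟨r, hr, hle⟩ := exists_pos_forall_le_norm_of_finite_inter_closedBall hfin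
  refine ⟨r, hr, fun x hx y hy hxy => ?_⟩
  rw [dist_eq_norm]
  exact hle _ (Set.sub_sub_sub_subset_add hAF (Set.sub_mem_sub hx hy)) (sub_ne_zero.2 hxy)

/-- If `A ⊆ ℝ^d` is relatively dense and uniformly discrete and `A - A ⊆ A + F`
for a finite set `F`, then `A - A` is uniformly discrete. -/
theorem diff_set_uniformly_discrete (d : ℕ) (A F : Set (Fin d → ℝ))
    (hdense : ∃ R > 0, ∀ x : Fin d → ℝ, ∃ a ∈ A, dist x a ≤ R)
    (hdisc : ∃ r > 0, ∀ a ∈ A, ∀ b ∈ A, a ≠ b → r ≤ dist a b)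
    (hF : F.Finite) (hAF : A - A ⊆ A + F) :
    ∃ r > 0, ∀ x ∈ A - A, ∀ y ∈ A - A, x ≠ y → r ≤ dist x y :=
  diff_set_uniformly_discrete_general d A F hdisc hF hAF
end

section
/- Let Γ be a discrete subgroup of ℝ^{d+e} and suppose the cut-and-project set M = π₁(Γ ∩ (ℝ^d × Ω)), for some bounded Ω ⊆ ℝ^e, is relatively dense in ℝ^d while Γ is not a lattice in ℝ^{d+e}. Then the orthogonal complement V₀ of the real span of Γ in ℝ^{d+e} is orthogonal to ℝ^d × {0}, i.e. V₀ = {0} × V for a subspace V ≤ ℝ^e. -/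
open RealInnerProductSpace

/-! If `v ⊥ Γ`, then for `γ ∈ Γ ∩ (ℝ^d × Ω)` we get `⟪v.1, γ.1⟫ = -⟪v.2, γ.2⟫`, which is bounded
because `Ω` is. So the linear functional `⟪v.1, ·⟫` is bounded above on the relatively dense set
`M`; evaluating near a large multiple of `v.1` shows that this forces `v.1 = 0`. -/

theorem eq_zero_of_bddAbove_inner_of_forall_exists_dist_le {E : Type*} [NormedAddCommGroup E]
    [InnerProductSpace ℝ E] {u : E} {S : Set E} {R : ℝ} (hS : ∀ x, ∃ m ∈ S, dist x m ≤ R)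
    (hbdd : BddAbove ((fun m ↦ ⟪u, m⟫) '' S)) : u = 0 := by
  by_contra hu
  obtain ⟨C, hC⟩ := hbdd
  have hu2 : 0 < ‖u‖ ^ 2 := by positivity
  set t := (C + ‖u‖ * R + 1) / ‖u‖ ^ 2
  obtain ⟨m, hm, hdist⟩ := hS (t • u)
  have hnear : ⟪u, t • u - m⟫ ≤ ‖u‖ * R :=
    (real_inner_le_norm _ _).trans (by gcongr; rwa [← dist_eq_norm])
  rw [inner_sub_right, real_inner_smul_right, real_inner_self_eq_norm_sq,
    div_mul_cancel₀ _ hu2.ne'] at hnear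
  have := hC (Set.mem_image_of_mem _ hm)
  linarith

theorem orthogonal_complement_of_gamma_general (d e : ℕ)
    (Γ : AddSubgroup (EuclideanSpace ℝ (Fin d) × EuclideanSpace ℝ (Fin e)))
    (Ω : Set (EuclideanSpace ℝ (Fin e))) (hΩ : Bornology.IsBounded Ω)
    (hM : ∃ R > 0, ∀ x : EuclideanSpace ℝ (Fin d),
      ∃ m ∈ Prod.fst '' ((Γ : Set (EuclideanSpace ℝ (Fin d) × EuclideanSpace ℝ (Fin e))) ∩
        Set.univ ×ˢ Ω), dist x m ≤ R) :
    ∀ v : EuclideanSpace ℝ (Fin d) × EuclideanSpace ℝ (Fin e),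
      (∀ γ ∈ Γ, ⟪v.1, γ.1⟫ + ⟪v.2, γ.2⟫ = 0) → v.1 = 0 := by
  intro v hv
  obtain ⟨R, -, hR⟩ := hM
  obtain ⟨C, hC⟩ := hΩ.exists_norm_le
  refine eq_zero_of_bddAbove_inner_of_forall_exists_dist_le hR ⟨‖v.2‖ * C, ?_⟩
  rintro _ ⟨_, ⟨γ, ⟨hγ, -, hγΩ⟩, rfl⟩, rfl⟩
  calc ⟪v.1, γ.1⟫ = -⟪v.2, γ.2⟫ := eq_neg_of_add_eq_zero_left (hv γ hγ)
    _ ≤ ‖v.2‖ * ‖γ.2‖ := (neg_le_abs _).trans (abs_real_inner_le_norm _ _)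
    _ ≤ ‖v.2‖ * C := by gcongr; exact hC _ hγΩ

/-- If `Γ ≤ ℝ^{d+e}` is a discrete subgroup, not a lattice, such that the
cut-and-project set `M = π₁(Γ ∩ (ℝ^d × Ω))` (with `Ω` bounded) is relatively
dense in `ℝ^d`, then every vector orthogonal to `Γ` has vanishing first
component, i.e. the orthogonal complement of `Γ` has the form `{0} × V`. -/
theorem orthogonal_complement_of_gamma (d e : ℕ)
    (Γ : AddSubgroup (EuclideanSpace ℝ (Fin d) × EuclideanSpace ℝ (Fin e)))
    (hdisc : ∃ ε > 0, ∀ γ ∈ Γ, γ ≠ 0 → ε ≤ ‖γ‖)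
    (hnotlattice : ¬ ∃ R > 0,
      ∀ p : EuclideanSpace ℝ (Fin d) × EuclideanSpace ℝ (Fin e), ∃ γ ∈ Γ, dist p γ ≤ R)
    (Ω : Set (EuclideanSpace ℝ (Fin e))) (hΩ : Bornology.IsBounded Ω)
    (hM : ∃ R > 0, ∀ x : EuclideanSpace ℝ (Fin d),
      ∃ m ∈ Prod.fst '' ((Γ : Set (EuclideanSpace ℝ (Fin d) × EuclideanSpace ℝ (Fin e))) ∩
        Set.univ ×ˢ Ω), dist x m ≤ R) :
    ∀ v : EuclideanSpace ℝ (Fin d) × EuclideanSpace ℝ (Fin e),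
      (∀ γ ∈ Γ, ⟪v.1, γ.1⟫ + ⟪v.2, γ.2⟫ = 0) → v.1 = 0 :=
  orthogonal_complement_of_gamma_general d e Γ Ω hΩ hM
end

section
/- Let Γ be a discrete subgroup of ℝ^{d+e}, and suppose there exists γ ∈ Γ \ {0} with π₁(γ) = 0. Let U ⊆ ℝ^e be the orthogonal complement of π₂(γ), ρ : ℝ^e → U the orthogonal projection, and Γ' = (id × ρ)(Γ). Then Γ' is a discrete subgroup of ℝ^d × U. -/
/-!
Since `γ.1 = 0` and `ρ` kills `γ.2`, the image of `p ∈ Γ` does not change when `p` is translated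
by an integer multiple of `γ`. Choosing the multiple by rounding the `γ.2`-coordinate of `p`, every
point of `Γ'` of norm `< 1` is the image of a point of `Γ` of norm `≤ 1 + ‖γ‖ / 2`. There are only
finitely many of these, as `Γ` is discrete, so the nonzero points of `Γ'` near `0` form a finite
set, which stays away from `0`.
-/

open Metric

section Discrete

variable {E : Type*} [NormedAddCommGroup E]

theorem AddSubgroup.finite_inter_closedBall_of_forall_le_norm [ProperSpace E]
    (Γ : AddSubgroup E) {ε : ℝ} (hε : 0 < ε) (hΓ : ∀ x ∈ Γ, x ≠ 0 → ε ≤ ‖x‖) (R : ℝ) :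
    ((Γ : Set E) ∩ closedBall 0 R).Finite := by
  have : DiscreteTopology Γ := DiscreteTopology.of_forall_le_dist hε fun x y hxy ↦ by
    simpa [dist_eq_norm] using hΓ _ (x - y).2 (sub_ne_zero.2 (Subtype.coe_ne_coe.2 hxy))
  rw [Set.inter_comm]
  exact finite_isBounded_inter_isClosed (isDiscrete_iff_discreteTopology.2 this)
    isBounded_closedBall AddSubgroup.isClosed_of_discrete

theorem exists_pos_forall_le_norm_of_finite {S T : Set E} (hT : T.Finite)
    (hST : ∀ x ∈ S, x ≠ 0 → ‖x‖ < 1 → x ∈ T) : ∃ ε > 0, ∀ x ∈ S, x ≠ 0 → ε ≤ ‖x‖ := by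
  obtain ⟨δ, hδ, hball⟩ := isOpen_iff.1 (hT.sdiff (t := {0})).isClosed.isOpen_compl 0
    (by simp)
  refine ⟨min δ 1, lt_min hδ one_pos, fun x hx hx0 ↦ ?_⟩
  by_contra! hlt
  exact hball (mem_ball_zero_iff.2 (hlt.trans_le (min_le_left _ _)))
    ⟨hST x hx hx0 (hlt.trans_le (min_le_right _ _)), hx0⟩

theorem AddSubgroup.exists_pos_forall_le_norm_image [ProperSpace E] {F : Type*}
    [NormedAddCommGroup F] (Γ : AddSubgroup E) (hΓ : ∃ ε > 0, ∀ x ∈ Γ, x ≠ 0 → ε ≤ ‖x‖)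
    (f : E → F) (R : ℝ) (hlift : ∀ p ∈ Γ, ‖f p‖ < 1 → ∃ q ∈ Γ, ‖q‖ ≤ R ∧ f q = f p) :
    ∃ ε > 0, ∀ y ∈ f '' Γ, y ≠ 0 → ε ≤ ‖y‖ := by
  obtain ⟨ε, hε, hΓε⟩ := hΓ
  refine exists_pos_forall_le_norm_of_finite
    ((Γ.finite_inter_closedBall_of_forall_le_norm hε hΓε R).image f) ?_
  rintro _ ⟨p, hp, rfl⟩ - hp1
  obtain ⟨q, hq, hqR, hqp⟩ := hlift p hp hp1
  exact ⟨q, ⟨hq, mem_closedBall_zero_iff.2 hqR⟩, hqp⟩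

end Discrete

section Projection

variable {F : Type*} [NormedAddCommGroup F] [InnerProductSpace ℝ F]

theorem exists_int_norm_sub_zsmul_le (v x : F) :
    ∃ n : ℤ, ‖x - n • v‖ ≤ ‖(ℝ ∙ v)ᗮ.orthogonalProjectionOnto x‖ + ‖v‖ / 2 := by
  obtain ⟨t, ht⟩ := Submodule.mem_span_singleton.1 ((ℝ ∙ v).orthogonalProjectionOnto x).2
  have hx : x = (ℝ ∙ v)ᗮ.orthogonalProjectionOnto x + t • v := by
    rw [ht, add_comm, ← Submodule.starProjection_apply, ← Submodule.starProjection_apply,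
      Submodule.starProjection_add_starProjection_orthogonal]
  refine ⟨round t, ?_⟩
  calc ‖x - round t • v‖ = ‖((ℝ ∙ v)ᗮ.orthogonalProjectionOnto x : F) + (t - round t) • v‖ := by
        rw [sub_smul, Int.cast_smul_eq_zsmul]; nth_rw 1 [hx]; abel_nf
    _ ≤ ‖(ℝ ∙ v)ᗮ.orthogonalProjectionOnto x‖ + |t - round t| * ‖v‖ := by
        rw [← Real.norm_eq_abs, ← norm_smul]; exact norm_add_le _ _
    _ ≤ ‖(ℝ ∙ v)ᗮ.orthogonalProjectionOnto x‖ + ‖v‖ / 2 := by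
        gcongr; nlinarith [abs_sub_round t, norm_nonneg v]

theorem exists_int_norm_sub_zsmul_le_of_fst_eq_zero {E : Type*} [NormedAddCommGroup E]
    (p γ : E × F) (hγ : γ.1 = 0) :
    ∃ n : ℤ, ‖p - n • γ‖ ≤ ‖(p.1, (ℝ ∙ γ.2)ᗮ.orthogonalProjectionOnto p.2)‖ + ‖γ‖ / 2 := by
  obtain ⟨n, hn⟩ := exists_int_norm_sub_zsmul_le γ.2 p.2
  refine ⟨n, ?_⟩
  have hγ2 : ‖γ.2‖ ≤ ‖γ‖ := norm_snd_le γ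
  have hp1 := norm_fst_le (p.1, (ℝ ∙ γ.2)ᗮ.orthogonalProjectionOnto p.2)
  have hp2 := norm_snd_le (p.1, (ℝ ∙ γ.2)ᗮ.orthogonalProjectionOnto p.2)
  rw [Prod.norm_def, Prod.fst_sub, Prod.snd_sub, Prod.smul_fst, Prod.smul_snd, hγ, smul_zero,
    sub_zero]
  exact max_le (by linarith [norm_nonneg γ]) (by linarith)

end Projection

theorem projected_group_discrete_general (d e : ℕ)
    (Γ : AddSubgroup (EuclideanSpace ℝ (Fin d) × EuclideanSpace ℝ (Fin e)))
    (hdisc : ∃ ε > 0, ∀ x ∈ Γ, x ≠ 0 → ε ≤ ‖x‖)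
    (γ : EuclideanSpace ℝ (Fin d) × EuclideanSpace ℝ (Fin e))
    (hγ : γ ∈ Γ) (hγ1 : γ.1 = 0)
    (Γ' : Set (EuclideanSpace ℝ (Fin d) × ((ℝ ∙ γ.2)ᗮ : Submodule ℝ (EuclideanSpace ℝ (Fin e)))))
    (hΓ' : Γ' = (fun p : EuclideanSpace ℝ (Fin d) × EuclideanSpace ℝ (Fin e) =>
      (p.1, Submodule.orthogonalProjectionOnto ((ℝ ∙ γ.2)ᗮ) p.2)) '' Γ) :
    ((0 ∈ Γ') ∧ ∀ x ∈ Γ', ∀ y ∈ Γ', x - y ∈ Γ') ∧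
      ∃ ε > 0, ∀ x ∈ Γ', x ≠ 0 → ε ≤ ‖x‖ := by
  set f := (ContinuousLinearMap.id ℝ (EuclideanSpace ℝ (Fin d))).prodMap
    (ℝ ∙ γ.2)ᗮ.orthogonalProjectionOnto
  obtain rfl : Γ' = f '' Γ := hΓ'
  have hfγ : f γ = 0 := by simp [f, Prod.map, hγ1]
  refine ⟨⟨⟨0, Γ.zero_mem, map_zero f⟩, ?_⟩,
    Γ.exists_pos_forall_le_norm_image hdisc f (1 + ‖γ‖ / 2) ?_⟩
  · rintro _ ⟨p, hp, rfl⟩ _ ⟨q, hq, rfl⟩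
    exact ⟨p - q, Γ.sub_mem hp hq, map_sub f p q⟩
  · intro p hp hp1
    obtain ⟨n, hn⟩ := exists_int_norm_sub_zsmul_le_of_fst_eq_zero p γ hγ1
    refine ⟨p - n • γ, Γ.sub_mem hp (Γ.zsmul_mem hγ n), hn.trans ?_, ?_⟩
    · exact add_le_add_left hp1.le _
    · rw [map_sub, map_zsmul, hfγ, smul_zero, sub_zero]

/-- If `Γ ≤ ℝ^d × ℝ^e` is a discrete subgroup and `γ ∈ Γ \ {0}` has `π₁(γ) = 0`,
then the image `Γ' = (id × ρ)(Γ)`, where `ρ` is the orthogonal projection of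
`ℝ^e` onto `U = (π₂ γ)^⊥`, is a discrete subgroup of `ℝ^d × U`. -/
theorem projected_group_discrete (d e : ℕ)
    (Γ : AddSubgroup (EuclideanSpace ℝ (Fin d) × EuclideanSpace ℝ (Fin e)))
    (hdisc : ∃ ε > 0, ∀ x ∈ Γ, x ≠ 0 → ε ≤ ‖x‖)
    (γ : EuclideanSpace ℝ (Fin d) × EuclideanSpace ℝ (Fin e))
    (hγ : γ ∈ Γ) (hγ0 : γ ≠ 0) (hγ1 : γ.1 = 0)
    (Γ' : Set (EuclideanSpace ℝ (Fin d) × ((ℝ ∙ γ.2)ᗮ : Submodule ℝ (EuclideanSpace ℝ (Fin e)))))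
    (hΓ' : Γ' = (fun p : EuclideanSpace ℝ (Fin d) × EuclideanSpace ℝ (Fin e) =>
      (p.1, Submodule.orthogonalProjectionOnto ((ℝ ∙ γ.2)ᗮ) p.2)) '' Γ) :
    ((0 ∈ Γ') ∧ ∀ x ∈ Γ', ∀ y ∈ Γ', x - y ∈ Γ') ∧
      ∃ ε > 0, ∀ x ∈ Γ', x ≠ 0 → ε ≤ ‖x‖ :=
  projected_group_discrete_general d e Γ hdisc γ hγ hγ1 Γ' hΓ'
end

section
/- Let A ⊆ ℝ^d be 1-relatively dense, let Q ⊆ ℝ^d be a finite symmetric set (Q = -Q) with 0 ∈ Q, and let F ⊆ ℝ^d be finite with |F| = h such that A ∩ [-N,N]^d ⊆ F + 2Q. If Q ⊆ [-4N, 4N]^d and F ⊆ [-9N, 9N]^d, then the set 2Q + (-2,2)^d has Lebesgue measure at least (2N)^d / h. -/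
/-!
Shrinking a point `x` of the open ball `B(0, N)` towards the origin by `1 - 1/N` and then moving
to a point of `A` within distance `1` lands in `A ∩ B̄(0, N)` at distance `< 2` from `x`, so
`B(0, N) ⊆ F + (2Q + B(0, 2))`. Translation invariance of Lebesgue measure and the union bound
over the `h` points of `F` give `(2N)^d = λ(B(0, N)) ≤ h · λ(2Q + B(0, 2))`. When `N ≤ 1` the ball
`B(0, N)` already lies in `2Q + B(0, 2)` because `0 ∈ 2Q`.
-/

open Pointwise MeasureTheory

theorem MeasureTheory.measure_add_le_ncard_mul {G : Type*} [AddGroup G] [MeasurableSpace G]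
    [MeasurableAdd G] (μ : Measure G) [μ.IsAddLeftInvariant] {F : Set G} (hF : F.Finite)
    (S : Set G) : μ (F + S) ≤ F.ncard * μ S := by
  lift F to Finset G using hF
  calc μ (↑F + S) = μ (⋃ f ∈ F, f +ᵥ S) := by
        rw [← Set.iUnion_add_left_image, Finset.set_biUnion_coe]; rfl
    _ ≤ ∑ f ∈ F, μ (f +ᵥ S) := measure_biUnion_finset_le F _
    _ = (F : Set G).ncard * μ S := by simp [measure_vadd]

theorem Metric.ball_subset_inter_closedBall_add_ball {E : Type*} [NormedAddCommGroup E]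
    [NormedSpace ℝ E] {A : Set E} {r N : ℝ} (hr : 0 < r) (hrN : r ≤ N)
    (hA : ∀ x, ∃ a ∈ A, dist x a ≤ r) :
    Metric.ball (0 : E) N ⊆ A ∩ Metric.closedBall 0 N + Metric.ball 0 (2 * r) := by
  intro x hx
  have hN : 0 < N := hr.trans_le hrN
  rw [mem_ball_zero_iff] at hx
  set y : E := (1 - r / N) • x with hy_def
  have hc : 0 ≤ 1 - r / N := sub_nonneg.2 ((div_le_one hN).2 hrN)
  have hy : ‖y‖ ≤ N - r := by
    calc ‖y‖ = (1 - r / N) * ‖x‖ := by rw [norm_smul, Real.norm_of_nonneg hc]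
      _ ≤ (1 - r / N) * N := by gcongr
      _ = N - r := by field_simp
  have hxy : dist x y < r := by
    calc dist x y = r / N * ‖x‖ := by
          rw [dist_eq_norm, hy_def, sub_smul, one_smul, sub_sub_cancel, norm_smul,
            Real.norm_of_nonneg (by positivity)]
      _ < r / N * N := by gcongr
      _ = r := by field_simp
  obtain ⟨a, ha, hya⟩ := hA y
  have haN : ‖a‖ ≤ N := by
    have := norm_le_norm_add_const_of_dist_le (dist_comm y a ▸ hya)
    linarith
  refine ⟨a, ⟨ha, mem_closedBall_zero_iff.2 haN⟩, x - a, ?_, add_sub_cancel _ _⟩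
  rw [mem_ball_zero_iff, ← dist_eq_norm]
  linarith [dist_triangle x y a]

theorem volume_lower_bound_for_sumset_general (d : ℕ) (A Q F : Set (Fin d → ℝ))
    (N : ℝ) (hN : 0 < N) (h : ℕ)
    (hdense : ∀ x : Fin d → ℝ, ∃ a ∈ A, dist x a ≤ 1)
    (hQ0 : (0 : Fin d → ℝ) ∈ Q)
    (hFcard : F.ncard = h)
    (hsub : A ∩ Metric.closedBall 0 N ⊆ F + (Q + Q)) :
    ENNReal.ofReal ((2 * N) ^ d / h) ≤ volume (Q + Q + Metric.ball 0 2) := by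
  rcases Nat.eq_zero_or_pos h with rfl | hpos
  · simp
  set V := volume (Q + Q + Metric.ball (0 : Fin d → ℝ) 2)
  have hball : volume (Metric.ball (0 : Fin d → ℝ) N) = ENNReal.ofReal ((2 * N) ^ d) := by
    simp [Real.volume_pi_ball _ hN]
  have hcover : volume (Metric.ball (0 : Fin d → ℝ) N) ≤ h * V := by
    rcases le_or_gt N 1 with hN1 | hN1
    · have hQQ : (0 : Fin d → ℝ) ∈ Q + Q := zero_add (0 : Fin d → ℝ) ▸ Set.add_mem_add hQ0 hQ0
      calc volume (Metric.ball (0 : Fin d → ℝ) N) ≤ V :=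
            measure_mono ((Metric.ball_subset_ball (by linarith)).trans
              (Set.subset_add_right _ hQQ))
        _ ≤ h * V := le_mul_of_one_le_left' (by exact_mod_cast hpos)
    · have hFfin : F.Finite := Set.finite_of_ncard_pos (hFcard ▸ hpos)
      calc volume (Metric.ball (0 : Fin d → ℝ) N) ≤ volume (F + (Q + Q + Metric.ball 0 2)) := by
            refine measure_mono ((Metric.ball_subset_inter_closedBall_add_ball one_pos hN1.le
              hdense).trans ?_)
            rw [mul_one, ← add_assoc]
            exact Set.add_subset_add_right hsub
        _ ≤ h * V := hFcard ▸ measure_add_le_ncard_mul volume hFfin _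
  rw [ENNReal.ofReal_div_of_pos (by exact_mod_cast hpos), ENNReal.ofReal_natCast, ← hball]
  exact ENNReal.div_le_of_le_mul' hcover

/-- Volume lower bound in the covering argument: if `A ⊆ ℝ^d` is `1`-relatively
dense, `Q` is finite symmetric with `0 ∈ Q`, `|F| = h`, and
`A ∩ [-N,N]^d ⊆ F + 2Q` with `Q ⊆ [-4N,4N]^d`, `F ⊆ [-9N,9N]^d`, then
`λ(2Q + (-2,2)^d) ≥ (2N)^d / h`. -/
theorem volume_lower_bound_for_sumset (d : ℕ) (A Q F : Set (Fin d → ℝ))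
    (N : ℝ) (hN : 0 < N) (h : ℕ)
    (hdense : ∀ x : Fin d → ℝ, ∃ a ∈ A, dist x a ≤ 1)
    (hQfin : Q.Finite) (hQsymm : Q = -Q) (hQ0 : (0 : Fin d → ℝ) ∈ Q)
    (hFfin : F.Finite) (hFcard : F.ncard = h)
    (hsub : A ∩ Metric.closedBall 0 N ⊆ F + (Q + Q))
    (hQb : Q ⊆ Metric.closedBall 0 (4 * N))
    (hFb : F ⊆ Metric.closedBall 0 (9 * N)) :
    ENNReal.ofReal ((2 * N) ^ d / h) ≤ volume (Q + Q + Metric.ball 0 2) :=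
  volume_lower_bound_for_sumset_general d A Q F N hN h hdense hQ0 hFcard hsub
end

section
/- Let A ⊆ ℝ^d and suppose A ⊆ F + M where F is finite and M = π₁(Γ ∩ (ℝ^d × Ω)) with Γ ≤ ℝ^{d+e} a discrete subgroup, Ω ⊆ ℝ^e compact, and suppose there is v ∈ ℝ^e with ⟨v, π₂(Γ)⟩ = ℤ. Then with U = v^⊥ ⊆ ℝ^e, Γ' = Γ ∩ (ℝ^d × U), γ ∈ Γ chosen with ⟨v, π₂(γ)⟩ = 1, n_max = max_{z ∈ Ω} |⟨v, z⟩|, E = {n·π₁(γ) : |n| ≤ n_max}, and Ω' = ⋃_{|n| ≤ n_max} U ∩ (Ω - n·π₂(γ)), one has M ⊆ E + π₁'(Γ' ∩ (ℝ^d × Ω')), where π₁' : ℝ^d × U → ℝ^d is the projection. -/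
open Pointwise RealInnerProductSpace

section

variable {G E : Type*} [AddCommGroup G] [NormedAddCommGroup E] [InnerProductSpace ℝ E]

theorem inner_snd_sub_zsmul (v : E) {γ γ₀ : G × E} (hγ₀v : ⟪v, γ₀.2⟫ = 1) (n : ℤ) :
    ⟪v, (γ - n • γ₀).2⟫ = ⟪v, γ.2⟫ - n := by
  rw [Prod.snd_sub, Prod.smul_snd, inner_sub_right, ← Int.cast_smul_eq_zsmul ℝ,
    real_inner_smul_right, hγ₀v, mul_one]

theorem sub_zsmul_mem_ker_inner {Γ : AddSubgroup (G × E)} {v : E} {γ γ₀ : G × E}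
    (hγ : γ ∈ Γ) (hγ₀ : γ₀ ∈ Γ) (hγ₀v : ⟪v, γ₀.2⟫ = 1) {n : ℤ} (hn : (n : ℝ) = ⟪v, γ.2⟫) :
    γ - n • γ₀ ∈ Γ ∧ ⟪v, (γ - n • γ₀).2⟫ = 0 :=
  ⟨sub_mem hγ (zsmul_mem hγ₀ n), by rw [inner_snd_sub_zsmul v hγ₀v, ← hn, sub_self]⟩

end

theorem internal_dimension_reduction_general (d e : ℕ)
    (Γ : AddSubgroup (EuclideanSpace ℝ (Fin d) × EuclideanSpace ℝ (Fin e)))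
    (Ω : Set (EuclideanSpace ℝ (Fin e)))
    (M : Set (EuclideanSpace ℝ (Fin d)))
    (hM : M = Prod.fst ''
      ((Γ : Set (EuclideanSpace ℝ (Fin d) × EuclideanSpace ℝ (Fin e))) ∩ Set.univ ×ˢ Ω))
    (v : EuclideanSpace ℝ (Fin e))
    (hv : (fun γ : EuclideanSpace ℝ (Fin d) × EuclideanSpace ℝ (Fin e) => ⟪v, γ.2⟫) ''
      (Γ : Set (EuclideanSpace ℝ (Fin d) × EuclideanSpace ℝ (Fin e)))
      = Set.range (fun n : ℤ => (n : ℝ)))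
    (γ₀ : EuclideanSpace ℝ (Fin d) × EuclideanSpace ℝ (Fin e))
    (hγ₀ : γ₀ ∈ Γ) (hγ₀v : ⟪v, γ₀.2⟫ = 1)
    (nmax : ℝ) (hnmax : ∀ z ∈ Ω, |⟪v, z⟫| ≤ nmax) :
    M ⊆ {x : EuclideanSpace ℝ (Fin d) | ∃ n : ℤ, |(n : ℝ)| ≤ nmax ∧ x = n • γ₀.1} +
      Prod.fst '' {γ : EuclideanSpace ℝ (Fin d) × EuclideanSpace ℝ (Fin e) |
        γ ∈ Γ ∧ ⟪v, γ.2⟫ = 0 ∧ ∃ n : ℤ, |(n : ℝ)| ≤ nmax ∧ γ.2 + n • γ₀.2 ∈ Ω} := by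
  subst hM
  rintro _ ⟨γ, ⟨hγΓ, -, hγΩ⟩, rfl⟩
  have hγv : ⟪v, γ.2⟫ ∈ Set.range (fun n : ℤ => (n : ℝ)) := hv ▸ ⟨γ, hγΓ, rfl⟩
  obtain ⟨n, hn : (n : ℝ) = ⟪v, γ.2⟫⟩ := hγv
  have hnmax_n : |(n : ℝ)| ≤ nmax := hn ▸ hnmax _ hγΩ
  obtain ⟨hΓ', hU⟩ := sub_zsmul_mem_ker_inner hγΓ hγ₀ hγ₀v hn
  refine ⟨n • γ₀.1, ⟨n, hnmax_n, rfl⟩, (γ - n • γ₀).1,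
    ⟨γ - n • γ₀, ⟨hΓ', hU, n, hnmax_n, by simpa using hγΩ⟩, rfl⟩, by simp⟩

/-- Reduction of one internal dimension of a cut-and-project set when
`⟨v, π₂(Γ)⟩ = ℤ`: with `U = v^⊥`, `Γ' = Γ ∩ (ℝ^d × U)`, `γ₀ ∈ Γ` with
`⟨v, π₂ γ₀⟩ = 1`, `|⟨v, z⟩| ≤ n_max` on `Ω`, `E = {n·π₁ γ₀ : |n| ≤ n_max}` and
`Ω' = ⋃_{|n| ≤ n_max} U ∩ (Ω - n·π₂ γ₀)`, one has
`M ⊆ E + π₁(Γ' ∩ (ℝ^d × Ω'))`. -/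
theorem internal_dimension_reduction (d e : ℕ)
    (A F : Set (EuclideanSpace ℝ (Fin d))) (hF : F.Finite)
    (Γ : AddSubgroup (EuclideanSpace ℝ (Fin d) × EuclideanSpace ℝ (Fin e)))
    (hdisc : ∃ ε > 0, ∀ x ∈ Γ, x ≠ 0 → ε ≤ ‖x‖)
    (Ω : Set (EuclideanSpace ℝ (Fin e))) (hΩ : IsCompact Ω)
    (M : Set (EuclideanSpace ℝ (Fin d)))
    (hM : M = Prod.fst ''
      ((Γ : Set (EuclideanSpace ℝ (Fin d) × EuclideanSpace ℝ (Fin e))) ∩ Set.univ ×ˢ Ω))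
    (hAFM : A ⊆ F + M)
    (v : EuclideanSpace ℝ (Fin e))
    (hv : (fun γ : EuclideanSpace ℝ (Fin d) × EuclideanSpace ℝ (Fin e) => ⟪v, γ.2⟫) ''
      (Γ : Set (EuclideanSpace ℝ (Fin d) × EuclideanSpace ℝ (Fin e)))
      = Set.range (fun n : ℤ => (n : ℝ)))
    (γ₀ : EuclideanSpace ℝ (Fin d) × EuclideanSpace ℝ (Fin e))
    (hγ₀ : γ₀ ∈ Γ) (hγ₀v : ⟪v, γ₀.2⟫ = 1)
    (nmax : ℝ) (hnmax : ∀ z ∈ Ω, |⟪v, z⟫| ≤ nmax) :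
    M ⊆ {x : EuclideanSpace ℝ (Fin d) | ∃ n : ℤ, |(n : ℝ)| ≤ nmax ∧ x = n • γ₀.1} +
      Prod.fst '' {γ : EuclideanSpace ℝ (Fin d) × EuclideanSpace ℝ (Fin e) |
        γ ∈ Γ ∧ ⟪v, γ.2⟫ = 0 ∧ ∃ n : ℤ, |(n : ℝ)| ≤ nmax ∧ γ.2 + n • γ₀.2 ∈ Ω} :=
  internal_dimension_reduction_general d e Γ Ω M hM v hv γ₀ hγ₀ hγ₀v nmax hnmax
end
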